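/- Let G be a finite simple graph whose edge set E(G) carries a fixed linear order, let k ≥ 1 be an integer, and let the weights w(e) ∈ {1,…,k} be chosen independently and uniformly at random for each edge e (i.e., consider the uniform probability measure on the finite product space {1,…,k}^{E(G)}). For each edge xy let A_{xy} denote the event that the induced sequences satisfy c(x) = c(y). Fix an edge uv and a set F ⊆ E(G) \ {uv}, and suppose the set of events K = {A_f : f ∈ F} leaves the edge uv open. Then A_{uv} is mutually independent of K: for every subset F' ⊆ F, P(A_{uv} ∩ ⋂_{f∈F'} A_f) = P(A_{uv}) · P(⋂_{f∈F'} A_f). -/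

import Mathlib

/-!
Common definitions: sequence colourings induced by an edge weighting and a linear
order on the edge set of a finite simple graph.
-/

open Finset

variable {V : Type*}

/-- The list of edges incident to `v`, sorted in increasing order with respect to the
linear order `σ` on `E(G)`. -/
noncomputable def incEdges [Fintype V] [DecidableEq V] (G : SimpleGraph V) [DecidableRel G.Adj]
    (σ : LinearOrder G.edgeSet) (v : V) : List G.edgeSet :=
  letI := σ
  ((Finset.univ : Finset G.edgeSet).filter (fun e : G.edgeSet => v ∈ (e : Sym2 V))).sort σ.le

/-- The induced sequence colouring: `c(v)` is the list of weights `w(e)` of the edges `e`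
incident to `v`, written in increasing order of `e` with respect to `σ`. -/
noncomputable def seqColor [Fintype V] [DecidableEq V] (G : SimpleGraph V) [DecidableRel G.Adj]
    (σ : LinearOrder G.edgeSet) {α : Type*} (w : G.edgeSet → α) (v : V) : List α :=
  (incEdges G σ v).map w

/-- The induced sequence colouring is proper: adjacent vertices receive distinct sequences. -/
def ProperSeq [Fintype V] [DecidableEq V] (G : SimpleGraph V) [DecidableRel G.Adj]
    (σ : LinearOrder G.edgeSet) (w : G.edgeSet → ℝ) : Prop :=
  ∀ u v : V, G.Adj u v → seqColor G σ w u ≠ seqColor G σ w v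

/-- The uniform probability of a set of outcomes in a finite space: `|S| / |Ω|`. -/
noncomputable def unifProb {Ω : Type*} (S : Set Ω) : ℝ :=
  (Nat.card S : ℝ) / (Nat.card Ω : ℝ)

/-- A random edge weighting with values in `{1,…,k}` is modelled by an element of the
finite product space `G.edgeSet → Fin k`; the weight of `e` is `(w e : ℕ) + 1 ∈ {1,…,k}`,
and the uniform measure on this product space chooses all weights independently and
uniformly at random. -/
noncomputable def randSeqColor [Fintype V] [DecidableEq V] (G : SimpleGraph V)
    [DecidableRel G.Adj] (σ : LinearOrder G.edgeSet) {k : ℕ} (w : G.edgeSet → Fin k)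
    (v : V) : List ℝ :=
  seqColor G σ (fun e => (((w e : ℕ) + 1 : ℕ) : ℝ)) v

/-- For an edge `f = xy`, the event `A_f` that the induced sequences of its two
endpoints coincide, `c(x) = c(y)`. -/
def seqEvent [Fintype V] [DecidableEq V] (G : SimpleGraph V) [DecidableRel G.Adj]
    (σ : LinearOrder G.edgeSet) (k : ℕ) (f : G.edgeSet) : Set (G.edgeSet → Fin k) :=
  {w | ∀ x y : V, (f : Sym2 V) = s(x, y) → randSeqColor G σ w x = randSeqColor G σ w y}

/-- The edge `e` is covered by the event `A_f`, `f = xy`, if `e` is incident to `x` or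
to `y`, i.e. `e` shares an endpoint with `f`. -/
def Covers [Fintype V] [DecidableEq V] (G : SimpleGraph V) [DecidableRel G.Adj]
    (f e : G.edgeSet) : Prop :=
  ∃ x : V, x ∈ (f : Sym2 V) ∧ x ∈ (e : Sym2 V)

/-- The edge `e` is uncovered by the set of events `{A_f : f ∈ F}` if no event in the set
covers it. -/
def UncoveredBy [Fintype V] [DecidableEq V] (G : SimpleGraph V) [DecidableRel G.Adj]
    (F : Finset G.edgeSet) (e : G.edgeSet) : Prop :=
  ∀ f ∈ F, ¬ Covers G f e

/-- The set of events `{A_f : f ∈ F}` leaves the edge `uv` open if, for every index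
`i < max (deg u) (deg v)`, at least one of the edges in `{e^u_i, e^v_i} \ {uv}`
(considering only those that exist, the `i`-th incident edges being taken with respect to
`σ`) is uncovered by the events. -/
def LeavesOpen [Fintype V] [DecidableEq V] (G : SimpleGraph V) [DecidableRel G.Adj]
    (σ : LinearOrder G.edgeSet) (F : Finset G.edgeSet) (u v : V) : Prop :=
  ∀ i : ℕ, i < max (G.degree u) (G.degree v) →
    ∃ ew : G.edgeSet,
      ((incEdges G σ u)[i]? = some ew ∨ (incEdges G σ v)[i]? = some ew) ∧
      (ew : Sym2 V) ≠ s(u, v) ∧ UncoveredBy G F ew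

/-!
Let `d` be the common degree of `u` and `v` (if the degrees differ, `A_{uv}` is empty), and
write `aᵢ = e^u_i`, `bᵢ = e^v_i`. The event `A_{uv}` says `w(aᵢ) = w(bᵢ)` for all `i < d`.
Openness picks for each `i` a side `sᵢ ∈ {aᵢ, bᵢ} \ {uv}` not covered by `K`; let `pᵢ` be the
other side. Since `uv` is the only edge at both `u` and `v`, the `sᵢ` are distinct and no `pᵢ`
is an `sⱼ`, so `A_{uv}` says exactly that each `w(sᵢ)` copies `w(pᵢ)`. Overwriting the values
at the `sᵢ` by those at the `pᵢ` is then a bijection between any event `C` that ignores the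
`sᵢ` and `(A_{uv} ∩ C) × [k]^d`. Hence `|C| = |A_{uv} ∩ C| · k^d`, both for `C = ⋂_{F'} A_f`
and for the whole space, and the product formula follows.
-/

open Function

section Resampling

variable {ι E α : Type*} {s p : ι → E}

theorem card_eq_card_inter_mul_card_fun (hs : Injective s) (hps : ∀ i j, p i ≠ s j)
    {A C : Set (E → α)} (hA : ∀ w, w ∈ A ↔ ∀ i, w (s i) = w (p i))
    (hC : ∀ w w', (∀ e ∉ Set.range s, w e = w' e) → w ∈ C → w' ∈ C) :
    Nat.card C = Nat.card ↥(A ∩ C) * Nat.card (ι → α) := by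
  have hp (i : ι) : p i ∉ Set.range s := fun ⟨j, hj⟩ => hps i j hj.symm
  have resample_mem (w : E → α) : extend s (w ∘ p) w ∈ A :=
    (hA _).2 fun i => by rw [hs.extend_apply, extend_apply' _ _ _ (hp i), comp_apply]
  have mem_C_extend (g : ι → α) {w : E → α} (hw : w ∈ C) : extend s g w ∈ C :=
    hC w _ (fun e he => (extend_apply' g w e he).symm) hw
  let resample : C ≃ ↥(A ∩ C) × (ι → α) :=
    { toFun := fun w => (⟨_, resample_mem w, mem_C_extend _ w.2⟩, w.1 ∘ s)
      invFun := fun ag => ⟨extend s ag.2 ag.1, mem_C_extend _ ag.1.2.2⟩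
      left_inv := by
        rintro ⟨w, hw⟩
        ext e
        by_cases he : e ∈ Set.range s
        · obtain ⟨i, rfl⟩ := he
          exact hs.extend_apply _ _ i
        · exact (extend_apply' _ _ e he).trans (extend_apply' _ _ e he)
      right_inv := by
        rintro ⟨⟨a, haA, haC⟩, g⟩
        refine Prod.ext (Subtype.ext (funext fun e => ?_)) (funext (hs.extend_apply g a))
        by_cases he : e ∈ Set.range s
        · obtain ⟨i, rfl⟩ := he
          simp only [hs.extend_apply, comp_apply, extend_apply' _ _ _ (hp i)]
          exact ((hA a).1 haA i).symm
        · exact (extend_apply' _ _ e he).trans (extend_apply' _ _ e he) }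
  rw [Nat.card_congr resample, Nat.card_prod]

theorem card_inter_mul_card_eq_mul_card (hs : Injective s) (hps : ∀ i j, p i ≠ s j)
    {A C : Set (E → α)} (hA : ∀ w, w ∈ A ↔ ∀ i, w (s i) = w (p i))
    (hC : ∀ w w', (∀ e ∉ Set.range s, w e = w' e) → w ∈ C → w' ∈ C) :
    Nat.card ↥(A ∩ C) * Nat.card (E → α) = Nat.card A * Nat.card C := by
  have hΩ := card_eq_card_inter_mul_card_fun hs hps hA (C := Set.univ) fun _ _ _ _ => trivial
  rw [Set.inter_univ, Nat.card_univ] at hΩ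
  rw [hΩ, card_eq_card_inter_mul_card_fun hs hps hA hC, mul_left_comm]

variable {a b : ι → E} {x : E}

theorem injective_of_forall_eq_or_eq (ha : Injective a) (hb : Injective b)
    (hab : ∀ i j, a i = b j → a i = x) (hsx : ∀ i, s i ≠ x)
    (hsp : ∀ i, s i = a i ∧ p i = b i ∨ s i = b i ∧ p i = a i) : Injective s := by
  intro i j h
  rcases hsp i with ⟨hi, -⟩ | ⟨hi, -⟩ <;> rcases hsp j with ⟨hj, -⟩ | ⟨hj, -⟩ <;>
    grind [Injective]

theorem apply_ne_apply_of_forall_eq_or_eq (ha : Injective a) (hb : Injective b)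
    (hab : ∀ i j, a i = b j → a i = x) (hsx : ∀ i, s i ≠ x)
    (hsp : ∀ i, s i = a i ∧ p i = b i ∨ s i = b i ∧ p i = a i) (i j : ι) : p i ≠ s j := by
  intro h
  rcases hsp i with ⟨hi, hpi⟩ | ⟨hi, hpi⟩ <;> rcases hsp j with ⟨hj, -⟩ | ⟨hj, -⟩ <;>
    grind [Injective]

end Resampling

theorem List.map_eq_map_iff_of_length_eq {α β : Type*} {l₁ l₂ : List α}
    (h : l₁.length = l₂.length) (f : α → β) :
    l₁.map f = l₂.map f ↔ ∀ i : Fin l₁.length, f (l₁.get i) = f (l₂.get (i.cast h)) := by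
  simp [List.ext_getElem_iff, h, Fin.forall_iff]

theorem unifProb_inter_eq_mul {Ω : Type*} {A B : Set Ω}
    (h : Nat.card ↥(A ∩ B) * Nat.card Ω = Nat.card A * Nat.card B) :
    unifProb (A ∩ B) = unifProb A * unifProb B := by
  unfold unifProb
  rcases eq_or_ne (Nat.card Ω) 0 with hΩ | hΩ
  · simp [hΩ]
  · field_simp
    exact_mod_cast h

section SeqColor

variable [Fintype V] [DecidableEq V] {G : SimpleGraph V} [DecidableRel G.Adj]
  {σ : LinearOrder G.edgeSet} {k : ℕ}

theorem mem_incEdges {x : V} {e : G.edgeSet} : e ∈ incEdges G σ x ↔ x ∈ (e : Sym2 V) := by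
  simp [incEdges]

theorem nodup_incEdges (x : V) : (incEdges G σ x).Nodup :=
  Finset.sort_nodup _ _

theorem length_incEdges (x : V) : (incEdges G σ x).length = G.degree x := by
  rw [incEdges, Finset.length_sort, ← G.card_incidenceFinset_eq_degree]
  refine Finset.card_nbij Subtype.val ?_ (fun _ _ _ _ => Subtype.ext) ?_
  · intro e he
    simp_all [SimpleGraph.incidenceSet]
  · intro e he
    simp_all [SimpleGraph.incidenceSet]

theorem randSeqColor_eq_randSeqColor_iff (w : G.edgeSet → Fin k) (x y : V) :
    randSeqColor G σ w x = randSeqColor G σ w y ↔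
      (incEdges G σ x).map w = (incEdges G σ y).map w := by
  have hinj : Injective fun a : Fin k => (((a : ℕ) + 1 : ℕ) : ℝ) := fun a b h => by
    simpa [Fin.val_inj] using h
  rw [← (List.map_injective_iff.2 hinj).eq_iff]
  simp [randSeqColor, seqColor, List.map_map, comp_def]

theorem randSeqColor_congr {w w' : G.edgeSet → Fin k} {x : V}
    (h : ∀ e : G.edgeSet, x ∈ (e : Sym2 V) → w e = w' e) :
    randSeqColor G σ w x = randSeqColor G σ w' x :=
  List.map_congr_left fun e he => by rw [h e (mem_incEdges.1 he)]

theorem mem_seqEvent_of_eqOn_covered {f : G.edgeSet} {w w' : G.edgeSet → Fin k}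
    (h : ∀ e, Covers G f e → w e = w' e) (hw : w ∈ seqEvent G σ k f) :
    w' ∈ seqEvent G σ k f := by
  intro x y hxy
  have hx : x ∈ (f : Sym2 V) := hxy ▸ Sym2.mem_mk_left x y
  have hy : y ∈ (f : Sym2 V) := hxy ▸ Sym2.mem_mk_right x y
  rw [← randSeqColor_congr fun e he => h e ⟨x, hx, he⟩,
    ← randSeqColor_congr fun e he => h e ⟨y, hy, he⟩]
  exact hw x y hxy

variable {u v : V}

theorem mem_seqEvent_edge_iff (huv : G.Adj u v) (w : G.edgeSet → Fin k) :
    w ∈ seqEvent G σ k ⟨s(u, v), G.mem_edgeSet.mpr huv⟩ ↔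
      (incEdges G σ u).map w = (incEdges G σ v).map w := by
  rw [← randSeqColor_eq_randSeqColor_iff]
  refine ⟨fun h => h u v rfl, fun h x y hxy => ?_⟩
  rcases Sym2.eq_iff.1 hxy with ⟨rfl, rfl⟩ | ⟨rfl, rfl⟩
  exacts [h, h.symm]

theorem seqEvent_eq_empty_of_degree_ne (huv : G.Adj u v) (h : G.degree u ≠ G.degree v) :
    seqEvent G σ k ⟨s(u, v), G.mem_edgeSet.mpr huv⟩ = ∅ := by
  refine Set.eq_empty_of_forall_notMem fun w hw => ?_
  rw [mem_seqEvent_edge_iff huv] at hw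
  exact h (by simpa [length_incEdges] using congrArg List.length hw)

theorem exists_free_edges (huv : G.Adj u v) (hdeg : G.degree u = G.degree v)
    {F : Finset G.edgeSet} (hopen : LeavesOpen G σ F u v) :
    ∃ (d : ℕ) (s p : Fin d → G.edgeSet), Injective s ∧ (∀ i j, p i ≠ s j) ∧
      (∀ i, UncoveredBy G F (s i)) ∧
      ∀ w : G.edgeSet → Fin k, w ∈ seqEvent G σ k ⟨s(u, v), G.mem_edgeSet.mpr huv⟩ ↔
        ∀ i, w (s i) = w (p i) := by
  set uv : G.edgeSet := ⟨s(u, v), G.mem_edgeSet.mpr huv⟩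
  set Lu := incEdges G σ u
  set Lv := incEdges G σ v
  have hlen : Lu.length = Lv.length := by simp only [Lu, Lv, length_incEdges, hdeg]
  set a : Fin Lu.length → G.edgeSet := Lu.get
  set b : Fin Lu.length → G.edgeSet := fun i => Lv.get (i.cast hlen)
  have hab (i j) (h : a i = b j) : a i = uv := by
    have hu : u ∈ (a i : Sym2 V) := mem_incEdges.1 (List.get_mem _ _)
    have hv : v ∈ (a i : Sym2 V) := h ▸ mem_incEdges.1 (List.get_mem _ _)
    exact Subtype.ext ((Sym2.mem_and_mem_iff huv.ne).1 ⟨hu, hv⟩)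
  have hside (i : Fin Lu.length) :
      ∃ e, (e = a i ∨ e = b i) ∧ e ≠ uv ∧ UncoveredBy G F e := by
    have hi : (i : ℕ) < max (G.degree u) (G.degree v) :=
      lt_max_of_lt_left (length_incEdges (σ := σ) u ▸ i.2)
    obtain ⟨e, he, heuv, heF⟩ := hopen i hi
    refine ⟨e, ?_, fun h => heuv (congrArg Subtype.val h), heF⟩
    rw [List.getElem?_eq_getElem i.2, List.getElem?_eq_getElem (i.2.trans_eq hlen)] at he
    exact he.imp (fun h => (Option.some_inj.1 h).symm) fun h => (Option.some_inj.1 h).symm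
  choose s hsab hsuv hsF using hside
  set p : Fin Lu.length → G.edgeSet := fun i => if s i = a i then b i else a i
  have hsp (i) : s i = a i ∧ p i = b i ∨ s i = b i ∧ p i = a i := by
    by_cases h : s i = a i
    · exact .inl ⟨h, if_pos h⟩
    · exact .inr ⟨(hsab i).resolve_left h, if_neg h⟩
  have ha : Injective a := List.nodup_iff_injective_get.1 (nodup_incEdges u)
  have hb : Injective b :=
    (List.nodup_iff_injective_get.1 (nodup_incEdges v)).comp (Fin.cast_injective hlen)
  refine ⟨Lu.length, s, p, injective_of_forall_eq_or_eq ha hb hab hsuv hsp,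
    apply_ne_apply_of_forall_eq_or_eq ha hb hab hsuv hsp, hsF, fun w => ?_⟩
  rw [mem_seqEvent_edge_iff huv, List.map_eq_map_iff_of_length_eq hlen]
  refine forall_congr' fun i => ?_
  rcases hsp i with ⟨hs, hp⟩ | ⟨hs, hp⟩ <;> rw [hs, hp]
  exact eq_comm

end SeqColor

theorem stmt_11_general [Fintype V] [DecidableEq V] (G : SimpleGraph V) [DecidableRel G.Adj]
    (σ : LinearOrder G.edgeSet) (k : ℕ)
    (u v : V) (huv : G.Adj u v)
    (F : Finset G.edgeSet)
    (hopen : LeavesOpen G σ F u v)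
    (F' : Finset G.edgeSet) (hF' : F' ⊆ F) :
    unifProb (seqEvent G σ k ⟨s(u, v), G.mem_edgeSet.mpr huv⟩ ∩ ⋂ f ∈ F', seqEvent G σ k f)
      = unifProb (seqEvent G σ k ⟨s(u, v), G.mem_edgeSet.mpr huv⟩)
        * unifProb (⋂ f ∈ F', seqEvent G σ k f) := by
  apply unifProb_inter_eq_mul
  by_cases hdeg : G.degree u = G.degree v
  · obtain ⟨d, s, p, hs, hps, hsF, hA⟩ := exists_free_edges (k := k) huv hdeg hopen
    refine card_inter_mul_card_eq_mul_card hs hps hA fun w w' hww' hw => ?_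
    simp only [Set.mem_iInter] at hw ⊢
    refine fun f hf => mem_seqEvent_of_eqOn_covered (fun e he => hww' e ?_) (hw f hf)
    rintro ⟨i, rfl⟩
    exact hsF i f (hF' hf) he
  · simp [seqEvent_eq_empty_of_degree_ne huv hdeg]

/-- If the set of events `K = {A_f : f ∈ F}` leaves the edge `uv` open, then `A_{uv}` is
mutually independent of `K`: for every `F' ⊆ F`,
`P(A_{uv} ∩ ⋂_{f ∈ F'} A_f) = P(A_{uv}) · P(⋂_{f ∈ F'} A_f)`. -/
theorem stmt_11 [Fintype V] [DecidableEq V] (G : SimpleGraph V) [DecidableRel G.Adj]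
    (σ : LinearOrder G.edgeSet) (k : ℕ) (hk : 1 ≤ k)
    (u v : V) (huv : G.Adj u v)
    (F : Finset G.edgeSet) (hF : (⟨s(u, v), G.mem_edgeSet.mpr huv⟩ : G.edgeSet) ∉ F)
    (hopen : LeavesOpen G σ F u v)
    (F' : Finset G.edgeSet) (hF' : F' ⊆ F) :
    unifProb (seqEvent G σ k ⟨s(u, v), G.mem_edgeSet.mpr huv⟩ ∩ ⋂ f ∈ F', seqEvent G σ k f)
      = unifProb (seqEvent G σ k ⟨s(u, v), G.mem_edgeSet.mpr huv⟩)
        * unifProb (⋂ f ∈ F', seqEvent G σ k f) :=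
  stmt_11_general G σ k u v huv F hopen F' hF'
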